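/- arXiv:2309.14145 — 3 statements merged into one kernel-verified Lean document; each statement's English description precedes it below -/
import Mathlib

section
/- Let q : ℕ → ℝ with q(0) ≠ 0, and let γ, δ be real numbers. Suppose the sequence x : ℕ → ℝ satisfies x₀ = 1 + γ and, for every n ≥ 1, ∑_{j=0}^{n−1} q(j)·x_{n−j} + (1 − ∑_{i=0}^{n−1} q(i))·x₀ = 1 + γ + δ·∑_{j=1}^{n} j·q(n−j). Then xₙ = 1 + γ + n·δ for every n ≥ 0. -/
/-!
The left-hand side of the recurrence at step `n` involves `x n` only through the term
`q 0 * x n`, so the system is lower triangular with nonzero diagonal and its solution with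
prescribed `x 0` is unique. The affine sequence `n ↦ 1 + γ + n δ` is a solution: its constant
parts contribute `1 + γ` because the coefficients `q j` and `1 - ∑ q i` sum to `1`, and after
reflecting `j ↦ n - j` its `δ`-parts give the right-hand sum.
-/

open Finset

section Recurrence

variable {R : Type*}

theorem eq_of_sum_range_mul_sub_eq [Ring R] [NoZeroDivisors R] {q x y : ℕ → R} (hq : q 0 ≠ 0)
    (h0 : x 0 = y 0)
    (hconv : ∀ n, 1 ≤ n → ∑ j ∈ range n, q j * x (n - j) = ∑ j ∈ range n, q j * y (n - j)) :
    x = y := by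
  funext n
  induction n using Nat.strong_induction_on with
  | _ n ih =>
    match n with
    | 0 => exact h0
    | m + 1 =>
      have hlower : ∑ j ∈ range m, q (j + 1) * x (m - j) =
          ∑ j ∈ range m, q (j + 1) * y (m - j) :=
        sum_congr rfl fun j _ => by rw [ih (m - j) (by omega)]
      have hdiag : q 0 * x (m + 1) = q 0 * y (m + 1) := by
        have h := hconv (m + 1) (by omega)
        simp only [sum_range_succ', Nat.add_sub_add_right, Nat.sub_zero, hlower] at h
        exact add_left_cancel h
      exact mul_left_cancel₀ hq hdiag

theorem sum_Icc_mul_sub_eq_sum_range [Semiring R] (q : ℕ → R) (n : ℕ) :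
    ∑ j ∈ Icc 1 n, (j : R) * q (n - j) = ∑ j ∈ range n, ((n - j : ℕ) : R) * q j := by
  refine sum_nbij' (n - ·) (n - ·) ?_ ?_ ?_ ?_ ?_ <;> intro j hj <;>
    simp only [mem_Icc, mem_range] at hj ⊢
  any_goals omega
  rw [Nat.sub_sub_self hj.2]

theorem affine_solves_recurrence [CommRing R] (q : ℕ → R) (a d : R) (n : ℕ) :
    ∑ j ∈ range n, q j * (a + ((n - j : ℕ) : R) * d) + (1 - ∑ i ∈ range n, q i) * a =
      a + d * ∑ j ∈ Icc 1 n, (j : R) * q (n - j) := by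
  have hd : ∑ j ∈ range n, q j * (((n - j : ℕ) : R) * d) =
      d * ∑ j ∈ range n, ((n - j : ℕ) : R) * q j := by
    rw [mul_sum]
    exact sum_congr rfl fun j _ => by ring
  rw [sum_Icc_mul_sub_eq_sum_range, ← hd]
  simp only [mul_add, sum_add_distrib, ← sum_mul]
  ring

end Recurrence

/-- the order-`n` non-homogeneous recurrence with variable coefficients
arising from the weak-feedback stationarity conditions,
`∑_{j=0}^{n-1} q(j)·x_{n-j} + (1 - ∑_{i=0}^{n-1} q(i))·x₀
  = 1 + γ + δ·∑_{j=1}^{n} j·q(n-j)` for `n ≥ 1`, with `x₀ = 1 + γ` and `q 0 ≠ 0`,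
has the unique solution `xₙ = 1 + γ + n·δ`. -/
theorem weakFB_recurrence_solution (q : ℕ → ℝ) (hq : q 0 ≠ 0) (γ δ : ℝ)
    (x : ℕ → ℝ) (h0 : x 0 = 1 + γ)
    (hrec : ∀ n : ℕ, 1 ≤ n →
      (∑ j ∈ Finset.range n, q j * x (n - j))
        + (1 - ∑ i ∈ Finset.range n, q i) * x 0
      = 1 + γ + δ * ∑ j ∈ Finset.Icc 1 n, (j : ℝ) * q (n - j)) :
    ∀ n : ℕ, x n = 1 + γ + n * δ := by
  have hx : x = fun n : ℕ => 1 + γ + n * δ := by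
    refine eq_of_sum_range_mul_sub_eq hq (by simp [h0]) fun n hn => ?_
    have hx_n := hrec n hn
    have haff := affine_solves_recurrence q (1 + γ) δ n
    rw [h0] at hx_n
    linarith
  exact congrFun hx
end

section
/- Let p be a pmf on ℕ with finite mean. Define F : [0,∞) → ℝ by F(c) = sup{ H(w ⋆ p) : w a pmf on ℕ with mean ∑ₙ n·w(n) ≤ c }, where (w ⋆ p)(n) = ∑_{j=0}^{n} w(j)·p(n−j). Then F is real-valued (finite), nonnegative, nondecreasing, and concave on [0,∞). -/
open scoped BigOperators

/-- Shannon entropy (natural log) of a pmf on ℕ. -/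
noncomputable def Hent (p : ℕ → ℝ) : ℝ := ∑' n, -(p n * Real.log (p n))

/-- `p` is a probability mass function on ℕ. -/
def IsPmf (p : ℕ → ℝ) : Prop := (∀ n, 0 ≤ p n) ∧ (∑' n, p n) = 1

/-- pmf of `W + S` for independent `W ~ w`, `S ~ p`. -/
noncomputable def convPmf (w p : ℕ → ℝ) : ℕ → ℝ :=
  fun n => ∑ j ∈ Finset.range (n + 1), w j * p (n - j)

/-- pmf of `(S - τ)₊` for `S ~ p` (truncated subtraction on ℕ). -/
noncomputable def truncSubPmf (p : ℕ → ℝ) (τ : ℕ) : ℕ → ℝ :=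
  fun n => ∑' i, if i - τ = n then p i else 0

/-- pmf of `(X - T)₊` for independent `X ~ x`, `T ~ q`. -/
noncomputable def subPairPmf (x q : ℕ → ℝ) : ℕ → ℝ :=
  fun n => ∑' i, ∑' j, if i - j = n then x i * q j else 0

/-- `w` has (well-defined) mean at most `c`. -/
def MeanLe (w : ℕ → ℝ) (c : ℝ) : Prop :=
  Summable (fun n : ℕ => (n : ℝ) * w n) ∧ (∑' n : ℕ, (n : ℝ) * w n) ≤ c

/-- Output entropies `H((X - (S₁ - τ)₊)₊ + S₂)` over admissible laws of `X`
(independent of `(S₁, S₂)`, with `E[(X - (S₁ - τ)₊)₊] ≤ c`);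
this is the generalized-feedback maximum output entropy problem. -/
def genFB (p : ℕ → ℝ) (τ : ℕ) (c : ℝ) : Set ℝ :=
  {h | ∃ x : ℕ → ℝ, IsPmf x ∧
    MeanLe (subPairPmf x (truncSubPmf p τ)) c ∧
    h = Hent (convPmf (subPairPmf x (truncSubPmf p τ)) p)}

/-- Output entropies `H(W + S)` over admissible laws of `W` (independent of `S`,
nonnegative, with `E[W] ≤ c`); this is the full-feedback maximum output entropy problem. -/
def fullFB (p : ℕ → ℝ) (c : ℝ) : Set ℝ :=
  {h | ∃ w : ℕ → ℝ, IsPmf w ∧ MeanLe w c ∧ h = Hent (convPmf w p)}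

/-!
Both claims rest on the first moment. The mean of `w ⋆ p` is `E[W] + E[S]`, and the termwise bound
`-x log x ≤ 1/(n+1)² + 2 n x` (from `-x log x ≤ 1/t + x log t` with `t = (n+1)²`) bounds the entropy
by a constant plus twice the mean, so every `F c` is finite. For concavity: `w ↦ w ⋆ p` and the mean
constraint are linear in `w`, and `H` is concave, so the mixture `a w₁ + b w₂` of admissible laws for
`c₁`, `c₂` is admissible for `a c₁ + b c₂` with entropy at least `a H(w₁ ⋆ p) + b H(w₂ ⋆ p)`; taking
suprema on both sides gives `a F c₁ + b F c₂ ≤ F (a c₁ + b c₂)`.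
-/

open Real Finset

lemma Hent_eq_tsum_negMulLog (q : ℕ → ℝ) : Hent q = ∑' n, negMulLog (q n) := by
  simp only [Hent, negMulLog_eq_neg]

namespace IsPmf

variable {p w₁ w₂ : ℕ → ℝ}

lemma summable (hp : IsPmf p) : Summable p := by
  by_contra h
  simpa [tsum_eq_zero_of_not_summable h] using hp.2

lemma le_one (hp : IsPmf p) (n : ℕ) : p n ≤ 1 :=
  hp.2 ▸ hp.summable.le_tsum n fun m _ => hp.1 m

lemma Hent_nonneg (hp : IsPmf p) : 0 ≤ Hent p := by
  rw [Hent_eq_tsum_negMulLog]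
  exact tsum_nonneg fun n => negMulLog_nonneg (hp.1 n) (hp.le_one n)

lemma mix (hw₁ : IsPmf w₁) (hw₂ : IsPmf w₂) {a b : ℝ} (ha : 0 ≤ a) (hb : 0 ≤ b) (hab : a + b = 1) :
    IsPmf fun n => a * w₁ n + b * w₂ n := by
  refine ⟨fun n => by have := hw₁.1 n; have := hw₂.1 n; positivity, ?_⟩
  rw [(hw₁.summable.mul_left a).tsum_add (hw₂.summable.mul_left b), tsum_mul_left,
    tsum_mul_left, hw₁.2, hw₂.2, mul_one, mul_one, hab]

end IsPmf

lemma hasSum_convPmf {f g : ℕ → ℝ} (hf : Summable f) (hg : Summable g) :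
    HasSum (convPmf f g) ((∑' n, f n) * ∑' n, g n) :=
  hasSum_sum_range_mul_of_summable_norm (summable_norm_iff.mpr hf) (summable_norm_iff.mpr hg)

lemma IsPmf.convPmf {w p : ℕ → ℝ} (hw : IsPmf w) (hp : IsPmf p) : IsPmf (convPmf w p) :=
  ⟨fun n => sum_nonneg fun j _ => mul_nonneg (hw.1 j) (hp.1 (n - j)),
    by simpa [hw.2, hp.2] using (hasSum_convPmf hw.summable hp.summable).tsum_eq⟩

lemma convPmf_mix (w₁ w₂ p : ℕ → ℝ) (a b : ℝ) :
    convPmf (fun m => a * w₁ m + b * w₂ m) p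
      = fun n => a * convPmf w₁ p n + b * convPmf w₂ p n := by
  funext n
  simp only [convPmf, mul_sum, ← sum_add_distrib]
  exact sum_congr rfl fun j _ => by ring

lemma natCast_mul_convPmf (w p : ℕ → ℝ) (n : ℕ) :
    (n : ℝ) * convPmf w p n
      = convPmf (fun k => k * w k) p n + convPmf w (fun k => k * p k) n := by
  simp only [convPmf, mul_sum, ← sum_add_distrib]
  refine sum_congr rfl fun k hk => ?_
  rw [Nat.cast_sub (Nat.lt_succ_iff.mp (mem_range.mp hk))]
  ring

lemma hasSum_natCast_mul_convPmf {w p : ℕ → ℝ} (hw : IsPmf w) (hp : IsPmf p)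
    (hmw : Summable fun n : ℕ => (n : ℝ) * w n) (hmp : Summable fun n : ℕ => (n : ℝ) * p n) :
    HasSum (fun n : ℕ => (n : ℝ) * convPmf w p n)
      ((∑' n : ℕ, (n : ℝ) * w n) + ∑' n : ℕ, (n : ℝ) * p n) := by
  have h := (hasSum_convPmf hmw hp.summable).add (hasSum_convPmf hw.summable hmp)
  rw [hp.2, hw.2, mul_one, one_mul] at h
  exact h.congr_fun fun n => natCast_mul_convPmf w p n

lemma negMulLog_le_inv_add_mul_log {x t : ℝ} (hx : 0 ≤ x) (ht : 0 < t) :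
    negMulLog x ≤ 1 / t + x * log t := by
  have key := negMulLog_le_one_sub_self (mul_nonneg hx ht.le)
  rw [negMulLog_mul, show negMulLog t = -t * log t from rfl] at key
  rw [← mul_le_mul_iff_of_pos_left ht, mul_add, mul_one_div_cancel ht.ne']
  nlinarith [mul_nonneg hx ht.le]

lemma negMulLog_le_inv_sq_add (n : ℕ) {x : ℝ} (hx : 0 ≤ x) :
    negMulLog x ≤ 1 / ((n : ℝ) + 1) ^ 2 + 2 * ((n : ℝ) * x) := by
  have hlog : log (((n : ℝ) + 1) ^ 2) ≤ 2 * n := by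
    rw [log_pow]
    have := log_le_sub_one_of_pos (by positivity : (0 : ℝ) < n + 1)
    push_cast
    linarith
  calc negMulLog x ≤ 1 / ((n : ℝ) + 1) ^ 2 + x * log (((n : ℝ) + 1) ^ 2) :=
        negMulLog_le_inv_add_mul_log hx (by positivity)
    _ ≤ _ := by nlinarith

lemma summable_one_div_nat_add_one_sq : Summable fun n : ℕ => 1 / ((n : ℝ) + 1) ^ 2 := by
  simpa using (summable_nat_add_iff 1).mpr (summable_one_div_nat_pow.mpr one_lt_two)

lemma IsPmf.summable_negMulLog {q : ℕ → ℝ} (hq : IsPmf q)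
    (hs : Summable fun n : ℕ => (n : ℝ) * q n) :
    Summable fun n => negMulLog (q n) :=
  .of_nonneg_of_le (fun n => negMulLog_nonneg (hq.1 n) (hq.le_one n))
    (fun n => negMulLog_le_inv_sq_add n (hq.1 n))
    (summable_one_div_nat_add_one_sq.add (hs.mul_left 2))

lemma Hent_le {q : ℕ → ℝ} (hq : IsPmf q) (hs : Summable fun n : ℕ => (n : ℝ) * q n) :
    Hent q ≤ (∑' n : ℕ, 1 / ((n : ℝ) + 1) ^ 2) + 2 * ∑' n : ℕ, (n : ℝ) * q n := by
  rw [Hent_eq_tsum_negMulLog, ← tsum_mul_left,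
    ← summable_one_div_nat_add_one_sq.tsum_add (hs.mul_left 2)]
  exact (hq.summable_negMulLog hs).tsum_le_tsum (fun n => negMulLog_le_inv_sq_add n (hq.1 n))
    (summable_one_div_nat_add_one_sq.add (hs.mul_left 2))

lemma le_Hent_mix {q₁ q₂ : ℕ → ℝ} (hq₁ : ∀ n, 0 ≤ q₁ n) (hq₂ : ∀ n, 0 ≤ q₂ n)
    (hs₁ : Summable fun n => negMulLog (q₁ n)) (hs₂ : Summable fun n => negMulLog (q₂ n))
    {a b : ℝ} (hs : Summable fun n => negMulLog (a * q₁ n + b * q₂ n))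
    (ha : 0 ≤ a) (hb : 0 ≤ b) (hab : a + b = 1) :
    a * Hent q₁ + b * Hent q₂ ≤ Hent fun n => a * q₁ n + b * q₂ n := by
  simp only [Hent_eq_tsum_negMulLog]
  rw [← tsum_mul_left, ← tsum_mul_left, ← (hs₁.mul_left a).tsum_add (hs₂.mul_left b)]
  exact ((hs₁.mul_left a).add (hs₂.mul_left b)).tsum_le_tsum
    (fun n => concaveOn_negMulLog.2 (Set.mem_Ici.2 (hq₁ n)) (Set.mem_Ici.2 (hq₂ n)) ha hb hab) hs

lemma concaveOn_sSup_of_mix {E : Type*} [AddCommGroup E] [Module ℝ E] {D : Set E}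
    {S : E → Set ℝ} (hD : Convex ℝ D) (hne : ∀ x ∈ D, (S x).Nonempty)
    (hbdd : ∀ x ∈ D, BddAbove (S x))
    (hmix : ∀ x ∈ D, ∀ y ∈ D, ∀ a b : ℝ, 0 ≤ a → 0 ≤ b → a + b = 1 →
      ∀ h₁ ∈ S x, ∀ h₂ ∈ S y, ∃ h ∈ S (a • x + b • y), a * h₁ + b * h₂ ≤ h) :
    ConcaveOn ℝ D fun x => sSup (S x) := by
  refine ⟨hD, fun x hx y hy a b ha hb hab => ?_⟩
  simp only [smul_eq_mul]
  rw [← smul_eq_mul, ← smul_eq_mul b, ← Real.sSup_smul_of_nonneg ha, ← Real.sSup_smul_of_nonneg hb,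
    ← csSup_add ((hne x hx).smul_set) ((hbdd x hx).smul_of_nonneg ha)
      ((hne y hy).smul_set) ((hbdd y hy).smul_of_nonneg hb)]
  refine csSup_le ((hne x hx).smul_set.add (hne y hy).smul_set) ?_
  rintro _ ⟨_, ⟨h₁, hh₁, rfl⟩, _, ⟨h₂, hh₂, rfl⟩, rfl⟩
  obtain ⟨h, hh, hle⟩ := hmix x hx y hy a b ha hb hab h₁ hh₁ h₂ hh₂
  exact hle.trans (le_csSup (hbdd _ (hD hx hy ha hb hab)) hh)

lemma MeanLe.mix {w₁ w₂ : ℕ → ℝ} {x y a b : ℝ} (hm₁ : MeanLe w₁ x) (hm₂ : MeanLe w₂ y)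
    (ha : 0 ≤ a) (hb : 0 ≤ b) : MeanLe (fun n => a * w₁ n + b * w₂ n) (a * x + b * y) := by
  have hs := (hm₁.1.mul_left a).hasSum.add (hm₂.1.mul_left b).hasSum
  rw [tsum_mul_left, tsum_mul_left] at hs
  have hs' := hs.congr_fun fun n : ℕ => show (n : ℝ) * (a * w₁ n + b * w₂ n) = _ by ring
  refine ⟨hs'.summable, hs'.tsum_eq ▸ ?_⟩
  exact add_le_add (mul_le_mul_of_nonneg_left hm₁.2 ha) (mul_le_mul_of_nonneg_left hm₂.2 hb)

lemma MeanLe.convPmf {w p : ℕ → ℝ} {c : ℝ} (hw : IsPmf w) (hm : MeanLe w c) (hp : IsPmf p)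
    (hmean : Summable fun n : ℕ => (n : ℝ) * p n) :
    MeanLe (convPmf w p) (c + ∑' n : ℕ, (n : ℝ) * p n) :=
  have h := hasSum_natCast_mul_convPmf hw hp hm.1 hmean
  ⟨h.summable, h.tsum_eq ▸ add_le_add_left hm.2 _⟩

section fullFB

variable {p : ℕ → ℝ}

lemma fullFB_nonempty {c : ℝ} (hc : 0 ≤ c) : (fullFB p c).Nonempty := by
  have hmean (n : ℕ) : (n : ℝ) * (if n = 0 then 1 else 0) = 0 := by
    rcases n with _ | n <;> simp
  exact ⟨_, _, ⟨fun _ => ite_nonneg zero_le_one le_rfl, tsum_ite_eq 0 fun _ => 1⟩,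
    ⟨summable_zero.congr fun n => (hmean n).symm, by simpa only [hmean, tsum_zero] using hc⟩, rfl⟩

lemma fullFB_mono {c d : ℝ} (hcd : c ≤ d) : fullFB p c ⊆ fullFB p d :=
  fun _ ⟨w, hw, hm, hh⟩ => ⟨w, hw, ⟨hm.1, hm.2.trans hcd⟩, hh⟩

lemma nonneg_of_mem_fullFB (hp : IsPmf p) {c h : ℝ} (hh : h ∈ fullFB p c) : 0 ≤ h := by
  obtain ⟨w, hw, -, rfl⟩ := hh
  exact (hw.convPmf hp).Hent_nonneg

lemma fullFB_bddAbove (hp : IsPmf p) (hmean : Summable fun n : ℕ => (n : ℝ) * p n) (c : ℝ) :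
    BddAbove (fullFB p c) := by
  refine ⟨(∑' n : ℕ, 1 / ((n : ℝ) + 1) ^ 2) + 2 * (c + ∑' n : ℕ, (n : ℝ) * p n), ?_⟩
  rintro _ ⟨w, hw, hm, rfl⟩
  have hq := hm.convPmf hw hp hmean
  linarith [Hent_le (hw.convPmf hp) hq.1, hq.2]

lemma exists_ge_of_mem_fullFB (hp : IsPmf p) (hmean : Summable fun n : ℕ => (n : ℝ) * p n)
    {x y a b h₁ h₂ : ℝ} (ha : 0 ≤ a) (hb : 0 ≤ b) (hab : a + b = 1)
    (hh₁ : h₁ ∈ fullFB p x) (hh₂ : h₂ ∈ fullFB p y) :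
    ∃ h ∈ fullFB p (a * x + b * y), a * h₁ + b * h₂ ≤ h := by
  obtain ⟨w₁, hw₁, hm₁, rfl⟩ := hh₁
  obtain ⟨w₂, hw₂, hm₂, rfl⟩ := hh₂
  have hw := hw₁.mix hw₂ ha hb hab
  have hm := hm₁.mix hm₂ ha hb
  refine ⟨_, ⟨_, hw, hm, rfl⟩, ?_⟩
  have hs := (hw.convPmf hp).summable_negMulLog (hm.convPmf hw hp hmean).1
  rw [convPmf_mix] at hs ⊢
  exact le_Hent_mix (hw₁.convPmf hp).1 (hw₂.convPmf hp).1
    ((hw₁.convPmf hp).summable_negMulLog (hm₁.convPmf hw₁ hp hmean).1)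
    ((hw₂.convPmf hp).summable_negMulLog (hm₂.convPmf hw₂ hp hmean).1) hs ha hb hab

end fullFB

/-- `F c = sup { H(w ⋆ p) : w a pmf on ℕ with mean ≤ c }` is
finite (the sup is of a nonempty, bounded-above set), nonnegative, nondecreasing,
and concave on `[0, ∞)`. -/
theorem fullFB_entropy_concave (p : ℕ → ℝ) (hp : IsPmf p)
    (hmean : Summable (fun n : ℕ => (n : ℝ) * p n))
    (F : ℝ → ℝ) (hF : ∀ c : ℝ, F c = sSup (fullFB p c)) :
    (∀ c ∈ Set.Ici (0 : ℝ), (fullFB p c).Nonempty ∧ BddAbove (fullFB p c) ∧ 0 ≤ F c)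
      ∧ MonotoneOn F (Set.Ici (0 : ℝ))
      ∧ ConcaveOn ℝ (Set.Ici (0 : ℝ)) F := by
  obtain rfl : F = fun c => sSup (fullFB p c) := funext hF
  have hbdd := fullFB_bddAbove hp hmean
  refine ⟨fun c hc => ⟨fullFB_nonempty hc, hbdd c, ?_⟩, ?_, ?_⟩
  · obtain ⟨h, hh⟩ := fullFB_nonempty (p := p) hc
    exact (nonneg_of_mem_fullFB hp hh).trans (le_csSup (hbdd c) hh)
  · exact fun c hc d _ hcd => csSup_le_csSup (hbdd d) (fullFB_nonempty hc) (fullFB_mono hcd)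
  · exact concaveOn_sSup_of_mix (convex_Ici 0) (fun _ hc => fullFB_nonempty hc)
      (fun c _ => hbdd c) fun _ _ _ _ _ _ ha hb hab _ hh₁ _ hh₂ =>
        exists_ge_of_mem_fullFB hp hmean ha hb hab hh₁ hh₂
end

section
/- Let 0 < λ < μ and set β = λ²/μ². Let S be an exponential random variable with rate μ (mean 1/μ), and let X be independent of S with law β·δ₀ + (1−β)·Exp(λ), i.e., P(X = 0) = β and X has density (1−β)·λ·e^{−λx} on (0,∞). Then the random variable (X − S)₊ = max(X − S, 0) has law (λ/μ)·δ₀ + (1 − λ/μ)·Exp(λ), i.e., P((X−S)₊ = 0) = λ/μ and (X−S)₊ has density (1 − λ/μ)·λ·e^{−λx} on (0,∞). In particular E[(X−S)₊] = 1/λ − 1/μ. -/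
open MeasureTheory

/-- The measure on ℝ with density `f` with respect to Lebesgue measure. -/
noncomputable def densMeasure (f : ℝ → ℝ) : Measure ℝ :=
  MeasureTheory.volume.withDensity fun x => ENNReal.ofReal (f x)

/-- Differential entropy (natural log) of a density `g` on ℝ. -/
noncomputable def dEnt (g : ℝ → ℝ) : ℝ := ∫ t, -(g t * Real.log (g t))

/-- Density of `Z + S` where `Z ~ ν` and `S` (independent of `Z`) has density `f`. -/
noncomputable def addDens (f : ℝ → ℝ) (ν : Measure ℝ) : ℝ → ℝ :=
  fun t => ∫ s, f (t - s) ∂ν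

/-- Law of `(X - T)₊` for independent `X ~ ν`, `T ~ κ`. -/
noncomputable def subPosLaw (ν κ : Measure ℝ) : Measure ℝ :=
  (ν.prod κ).map fun q => max (q.1 - q.2) 0

/-- The (nonnegative) measure `κ` has mean at most `c`. -/
def meanLeM (κ : Measure ℝ) (c : ℝ) : Prop :=
  (∫⁻ x, ENNReal.ofReal x ∂κ) ≤ ENNReal.ofReal c

/-- Differential output entropies `h(W + S)` over admissible laws `ν` of `W`
(nonnegative, independent of `S` which has density `f`, with `E[W] ≤ c`);
the full-feedback maximum output entropy problem. -/
def fullFBc (f : ℝ → ℝ) (c : ℝ) : Set ℝ :=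
  {h | ∃ ν : Measure ℝ, IsProbabilityMeasure ν ∧ ν (Set.Iio 0) = 0 ∧
    meanLeM ν c ∧ h = dEnt (addDens f ν)}

/-- Differential output entropies `h((X - S₁)₊ + S₂)` over admissible laws `ν` of `X`
(nonnegative, independent of `(S₁, S₂)` which are i.i.d. with density `f`, with
`E[(X - S₁)₊] ≤ c`); the weak-feedback maximum output entropy problem. -/
def weakFBc (f : ℝ → ℝ) (c : ℝ) : Set ℝ :=
  {h | ∃ ν : Measure ℝ, IsProbabilityMeasure ν ∧ ν (Set.Iio 0) = 0 ∧
    meanLeM (subPosLaw ν (densMeasure f)) c ∧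
    h = dEnt (addDens f (subPosLaw ν (densMeasure f)))}

/-- Differential output entropies `h((X - (S₁ - τ)₊)₊ + S₂)` over admissible laws `ν`
of `X` (nonnegative, independent of `(S₁, S₂)` which are i.i.d. with density `f`, with
`E[(X - (S₁ - τ)₊)₊] ≤ c`); the generalized-feedback maximum output entropy problem. -/
def genFBc (f : ℝ → ℝ) (τ : ℝ) (c : ℝ) : Set ℝ :=
  {h | ∃ ν : Measure ℝ, IsProbabilityMeasure ν ∧ ν (Set.Iio 0) = 0 ∧
    meanLeM (subPosLaw ν ((densMeasure f).map fun s => max (s - τ) 0)) c ∧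
    h = dEnt (addDens f (subPosLaw ν ((densMeasure f).map fun s => max (s - τ) 0)))}

/-- Density of the exponential distribution with rate `r` (on `[0, ∞)`). -/
noncomputable def expDens (r : ℝ) : ℝ → ℝ :=
  fun x => if 0 ≤ x then r * Real.exp (-(r * x)) else 0

/-- The exponential distribution with rate `r`. -/
noncomputable def expM (r : ℝ) : Measure ℝ :=
  MeasureTheory.volume.withDensity fun x => ENNReal.ofReal (expDens r x)

/-- The mixture `β·δ₀ + (1 - β)·Exp(r)`. -/
noncomputable def diracExpMix (β r : ℝ) : Measure ℝ :=
  ENNReal.ofReal β • Measure.dirac 0 + ENNReal.ofReal (1 - β) • expM r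

/-!
For `t ≥ 0`, conditioning on `S` gives
`P((X - S)₊ > t) = E[P(X > t + S | S)] = (1 - β) e^{-λt} E[e^{-λS}]`
`= (1 - β) μ/(λ + μ) e^{-λt}`, and with `β = λ²/μ²` the constant is `1 - λ/μ`. These are the
tails of `(λ/μ)·δ₀ + (1 - λ/μ)·Exp(λ)`, and tails determine a probability measure. The mean
then follows from the layer-cake formula `E[W] = ∫₀^∞ P(W > t) dt`.
-/

open Set ProbabilityTheory Real
open scoped ENNReal

lemma lintegral_Ioi_ofReal_mul_exp_neg_mul {c r : ℝ} (hc : 0 ≤ c) (hr : 0 < r) (t : ℝ) :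
    ∫⁻ x in Ioi t, ENNReal.ofReal (c * exp (-(r * x)))
      = ENNReal.ofReal (c * exp (-(r * t)) / r) := by
  have hneg : -r < 0 := neg_neg_of_pos hr
  simp_rw [← neg_mul]
  rw [← ofReal_integral_eq_lintegral_ofReal ((integrableOn_exp_mul_Ioi hneg t).const_mul c)
    (Filter.Eventually.of_forall fun x => by positivity), integral_const_mul,
    integral_exp_mul_Ioi hneg]
  congr 1
  field_simp

lemma integral_id_of_measure_Ioi_eq {L : Measure ℝ} (hL : ∀ᵐ u ∂L, 0 ≤ u) {c r : ℝ}
    (hc : 0 ≤ c) (hr : 0 < r)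
    (htail : ∀ t > 0, L (Ioi t) = ENNReal.ofReal (c * exp (-(r * t)))) :
    ∫ u, u ∂L = c / r := by
  have hlayer : ∫⁻ t in Ioi 0, L {u | t < u}
      = ∫⁻ t in Ioi 0, ENNReal.ofReal (c * exp (-(r * t))) :=
    setLIntegral_congr_fun measurableSet_Ioi htail
  rw [integral_eq_lintegral_of_nonneg_ae hL aestronglyMeasurable_id,
    lintegral_eq_lintegral_meas_lt L hL aemeasurable_id, hlayer,
    lintegral_Ioi_ofReal_mul_exp_neg_mul hc hr, ENNReal.toReal_ofReal (by positivity)]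
  simp

lemma ext_of_Ioi_of_isProbabilityMeasure {μ ν : Measure ℝ} [IsProbabilityMeasure μ]
    [IsProbabilityMeasure ν] (h : ∀ t, μ (Ioi t) = ν (Ioi t)) : μ = ν :=
  Measure.ext_of_Iic μ ν fun t => by
    rw [← compl_Ioi, prob_compl_eq_one_sub measurableSet_Ioi,
      prob_compl_eq_one_sub measurableSet_Ioi, h]

section ExponentialMixture

variable {r : ℝ}

instance : SFinite (expM r) := by
  rw [expM]
  infer_instance

lemma expM_Ioi (hr : 0 < r) {t : ℝ} (ht : 0 ≤ t) :
    expM r (Ioi t) = ENNReal.ofReal (exp (-(r * t))) := by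
  rw [expM, withDensity_apply _ measurableSet_Ioi,
    setLIntegral_congr_fun measurableSet_Ioi fun x (hx : t < x) => by
      rw [expDens, if_pos (ht.trans hx.le)],
    lintegral_Ioi_ofReal_mul_exp_neg_mul hr.le hr]
  congr 1
  field_simp

lemma lintegral_expM (g : ℝ → ℝ≥0∞) :
    ∫⁻ x, g x ∂expM r = ∫⁻ x in Ioi 0, ENNReal.ofReal (r * exp (-(r * x))) * g x := by
  have hmeas : Measurable fun x => ENNReal.ofReal (expDens r x) :=
    (Measurable.ite measurableSet_Ici (by fun_prop) measurable_const).ennreal_ofReal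
  have hind : (fun x => ENNReal.ofReal (expDens r x)) * g
      = (Ici 0).indicator fun x => ENNReal.ofReal (r * exp (-(r * x))) * g x := by
    ext x
    by_cases hx : 0 ≤ x <;> simp [expDens, hx]
  rw [expM, lintegral_withDensity_eq_lintegral_mul_non_measurable _ hmeas
    (Filter.Eventually.of_forall fun _ => ENNReal.ofReal_lt_top), hind,
    lintegral_indicator measurableSet_Ici, Measure.restrict_congr_set Ioi_ae_eq_Ici]

lemma isProbabilityMeasure_expM (hr : 0 < r) : IsProbabilityMeasure (expM r) := by
  constructor
  rw [← setLIntegral_one, Measure.restrict_univ, lintegral_expM]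
  simp_rw [mul_one]
  rw [lintegral_Ioi_ofReal_mul_exp_neg_mul hr.le hr]
  simp [hr.ne']

lemma expM_Ioi_of_neg (hr : 0 < r) {t : ℝ} (ht : t < 0) : expM r (Ioi t) = 1 := by
  have := isProbabilityMeasure_expM hr
  refine le_antisymm prob_le_one ?_
  calc (1 : ℝ≥0∞) = expM r (Ioi 0) := by simp [expM_Ioi hr le_rfl]
    _ ≤ expM r (Ioi t) := measure_mono (Ioi_subset_Ioi ht.le)

instance (β : ℝ) : SFinite (diracExpMix β r) := by
  rw [diracExpMix]
  infer_instance

lemma diracExpMix_Ioi (β : ℝ) (hr : 0 < r) {t : ℝ} (ht : 0 ≤ t) :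
    diracExpMix β r (Ioi t) = ENNReal.ofReal ((1 - β) * exp (-(r * t))) := by
  rw [diracExpMix, Measure.add_apply, Measure.smul_apply, Measure.smul_apply,
    Measure.dirac_apply' _ measurableSet_Ioi, indicator_of_notMem (notMem_Ioi.mpr ht),
    expM_Ioi hr ht, ENNReal.ofReal_mul' (exp_pos _).le]
  simp

lemma diracExpMix_Ioi_of_neg {β : ℝ} (hβ₀ : 0 ≤ β) (hβ₁ : β ≤ 1) (hr : 0 < r) {t : ℝ}
    (ht : t < 0) : diracExpMix β r (Ioi t) = 1 := by
  rw [diracExpMix, Measure.add_apply, Measure.smul_apply, Measure.smul_apply,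
    Measure.dirac_apply' _ measurableSet_Ioi, indicator_of_mem (mem_Ioi.mpr ht),
    expM_Ioi_of_neg hr ht, smul_eq_mul, smul_eq_mul, Pi.one_apply, mul_one, mul_one,
    ← ENNReal.ofReal_add hβ₀ (sub_nonneg.mpr hβ₁)]
  simp

lemma isProbabilityMeasure_diracExpMix {β : ℝ} (hβ₀ : 0 ≤ β) (hβ₁ : β ≤ 1) (hr : 0 < r) :
    IsProbabilityMeasure (diracExpMix β r) := by
  have := isProbabilityMeasure_expM hr
  constructor
  rw [diracExpMix, Measure.add_apply, Measure.smul_apply, Measure.smul_apply, measure_univ,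
    measure_univ, smul_eq_mul, smul_eq_mul, mul_one, mul_one,
    ← ENNReal.ofReal_add hβ₀ (sub_nonneg.mpr hβ₁)]
  simp

end ExponentialMixture

section SubPosLaw

variable {ν κ : Measure ℝ}

lemma measurable_max_sub_zero : Measurable fun q : ℝ × ℝ => max (q.1 - q.2) 0 := by
  fun_prop

lemma ae_nonneg_subPosLaw : ∀ᵐ u ∂subPosLaw ν κ, 0 ≤ u :=
  ae_map_iff measurable_max_sub_zero.aemeasurable measurableSet_Ici |>.mpr <|
    Filter.Eventually.of_forall fun _ => le_max_right _ _

lemma subPosLaw_Ioi [SFinite ν] [SFinite κ] {t : ℝ} (ht : 0 ≤ t) :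
    subPosLaw ν κ (Ioi t) = ∫⁻ s, ν (Ioi (t + s)) ∂κ := by
  rw [subPosLaw, Measure.map_apply measurable_max_sub_zero measurableSet_Ioi,
    Measure.prod_apply_symm (measurable_max_sub_zero measurableSet_Ioi)]
  refine lintegral_congr fun s => congrArg ν <| ext fun x => ?_
  simp only [mem_preimage, mem_Ioi, lt_max_iff]
  constructor
  · rintro (h | h) <;> linarith
  · intro h; left; linarith

instance [IsProbabilityMeasure ν] [IsProbabilityMeasure κ] :
    IsProbabilityMeasure (subPosLaw ν κ) :=
  Measure.isProbabilityMeasure_map measurable_max_sub_zero.aemeasurable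

lemma subPosLaw_Ioi_of_neg [IsProbabilityMeasure ν] [IsProbabilityMeasure κ] {t : ℝ}
    (ht : t < 0) : subPosLaw ν κ (Ioi t) = 1 := by
  rw [subPosLaw, Measure.map_apply measurable_max_sub_zero measurableSet_Ioi]
  have hpre : (fun q : ℝ × ℝ => max (q.1 - q.2) 0) ⁻¹' Ioi t = univ :=
    eq_univ_of_forall fun _ => ht.trans_le (le_max_right _ _)
  rw [hpre, measure_univ]

end SubPosLaw

lemma subPosLaw_diracExpMix_expM_Ioi {β lam mu : ℝ} (hβ : β ≤ 1) (hlam : 0 < lam)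
    (hmu : 0 < mu) {t : ℝ} (ht : 0 ≤ t) :
    subPosLaw (diracExpMix β lam) (expM mu) (Ioi t)
      = ENNReal.ofReal ((1 - β) * (mu / (lam + mu)) * exp (-(lam * t))) := by
  have hc : 0 ≤ (1 - β) * mu * exp (-(lam * t)) := by
    have := sub_nonneg.mpr hβ
    positivity
  have hdens : ∀ s, mu * exp (-(mu * s)) * ((1 - β) * exp (-(lam * (t + s))))
      = (1 - β) * mu * exp (-(lam * t)) * exp (-((lam + mu) * s)) := by
    intro s
    have : exp (-(mu * s)) * exp (-(lam * (t + s)))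
        = exp (-(lam * t)) * exp (-((lam + mu) * s)) := by
      rw [← exp_add, ← exp_add]
      ring_nf
    linear_combination ((1 - β) * mu) * this
  rw [subPosLaw_Ioi ht, lintegral_expM,
    setLIntegral_congr_fun measurableSet_Ioi fun s (hs : 0 < s) => by
      rw [diracExpMix_Ioi β hlam (by linarith : 0 ≤ t + s), ← ENNReal.ofReal_mul (by positivity),
        hdens],
    lintegral_Ioi_ofReal_mul_exp_neg_mul hc (by linarith)]
  congr 1
  field_simp
  simp

/-- if `S ~ Exp(μ)` and `X ⫫ S` with law
`(λ²/μ²)·δ₀ + (1 - λ²/μ²)·Exp(λ)` where `0 < λ < μ`, then `(X - S)₊` has law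
`(λ/μ)·δ₀ + (1 - λ/μ)·Exp(λ)`; in particular `E[(X - S)₊] = 1/λ - 1/μ`. -/
theorem exponential_weakFB_law (lam mu : ℝ) (hlam : 0 < lam) (hmu : lam < mu) :
    subPosLaw (diracExpMix (lam ^ 2 / mu ^ 2) lam) (expM mu)
        = diracExpMix (lam / mu) lam
      ∧ (∫ u, u ∂(subPosLaw (diracExpMix (lam ^ 2 / mu ^ 2) lam) (expM mu)))
        = 1 / lam - 1 / mu := by
  have hmu₀ : 0 < mu := hlam.trans hmu
  have hβ : lam ^ 2 / mu ^ 2 ≤ 1 := div_le_one_of_le₀ (by nlinarith) (by positivity)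
  have hρ : lam / mu ≤ 1 := div_le_one_of_le₀ hmu.le hmu₀.le
  have hconst : (1 - lam ^ 2 / mu ^ 2) * (mu / (lam + mu)) = 1 - lam / mu := by
    field_simp
    ring
  have htail : ∀ t ≥ 0, subPosLaw (diracExpMix (lam ^ 2 / mu ^ 2) lam) (expM mu) (Ioi t)
      = ENNReal.ofReal ((1 - lam / mu) * exp (-(lam * t))) := fun t ht => by
    rw [subPosLaw_diracExpMix_expM_Ioi hβ hlam hmu₀ ht, hconst]
  have := isProbabilityMeasure_expM hmu₀
  have := isProbabilityMeasure_diracExpMix (by positivity) hβ hlam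
  have := isProbabilityMeasure_diracExpMix (by positivity) hρ hlam
  refine ⟨ext_of_Ioi_of_isProbabilityMeasure fun t => ?_, ?_⟩
  · rcases lt_or_ge t 0 with ht | ht
    · rw [subPosLaw_Ioi_of_neg ht, diracExpMix_Ioi_of_neg (by positivity) hρ hlam ht]
    · rw [htail t ht, diracExpMix_Ioi _ hlam ht]
  · rw [integral_id_of_measure_Ioi_eq ae_nonneg_subPosLaw (sub_nonneg.mpr hρ) hlam
      fun t ht => htail t ht.le]
    field_simp
end
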